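/- Let M be a von Neumann algebra with cyclic and separating unit vector Ω and Tomita operator S. Then S extends to an isometry of H if and only if the vector state ω(M) = ⟨Ω, MΩ⟩ is a trace on M (i.e. ω(M*M) = ω(MM*) for all M ∈ M). -/

import Mathlib

open ContinuousLinearMap

/-- **Theorem.** Let `M` be a von Neumann algebra with cyclic and separating unit vector `Ω`.
The Tomita operator `S₀ : m Ω ↦ m* Ω` extends to an isometry of `H` if and only if the
vector state `ω(m) = ⟪Ω, m Ω⟫` is a trace on `M`, i.e. `ω(m*m) = ω(m m*)` for all `m ∈ M`. -/
theorem tomita_isometry_iff_trace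
    {H : Type*} [NormedAddCommGroup H] [InnerProductSpace ℂ H] [CompleteSpace H]
    (M : VonNeumannAlgebra H) (Ω : H) (hΩ : ‖Ω‖ = 1)
    (hcyclic : Dense {x : H | ∃ m ∈ M, m Ω = x})
    (hseparating : ∀ m ∈ M, m Ω = 0 → m = 0) :
    (∃ S : H → H, Isometry S ∧ ∀ m ∈ M, S (m Ω) = (adjoint m) Ω) ↔
      (∀ m ∈ M, (inner ℂ Ω ((adjoint m) (m Ω)) : ℂ) = inner ℂ Ω (m ((adjoint m) Ω))) := by
  have inner_left : ∀ m : H →L[ℂ] H, (inner ℂ Ω ((adjoint m) (m Ω)) : ℂ) = inner ℂ (m Ω) (m Ω) :=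
    fun m => adjoint_inner_right m Ω (m Ω)
  have inner_right : ∀ m : H →L[ℂ] H,
      (inner ℂ Ω (m ((adjoint m) Ω)) : ℂ) = inner ℂ ((adjoint m) Ω) ((adjoint m) Ω) :=
    fun m => (adjoint_inner_left m ((adjoint m) Ω) Ω).symm
  constructor
  · -- isometry → trace
    rintro ⟨S, hS, hSm⟩ m hm
    have h0 : S 0 = 0 := by
      have := hSm 0 (zero_mem M.toStarSubalgebra)
      simpa using this
    have hd := hS.dist_eq (m Ω) 0
    rw [hSm m hm, h0, dist_zero_right, dist_zero_right] at hd
    rw [inner_left, inner_right, inner_self_eq_norm_sq_to_K, inner_self_eq_norm_sq_to_K, hd]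
  · -- trace → isometry
    intro h
    have key : ∀ m ∈ M, ‖(adjoint m) Ω‖ = ‖m Ω‖ := by
      intro m hm
      have h1 := h m hm
      rw [inner_left, inner_right] at h1
      rw [norm_eq_sqrt_re_inner (𝕜 := ℂ), norm_eq_sqrt_re_inner (𝕜 := ℂ), h1]
    have keyd : ∀ m ∈ M, ∀ n ∈ M,
        dist ((adjoint m) Ω) ((adjoint n) Ω) = dist (m Ω) (n Ω) := by
      intro m hm n hn
      have hmn : m - n ∈ M := sub_mem hm hn
      have := key (m - n) hmn
      simpa [dist_eq_norm, map_sub, ContinuousLinearMap.sub_apply] using this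
    set D : Set H := {x : H | ∃ m ∈ M, m Ω = x} with hD
    have hrep : ∀ x : D, ∃ m, m ∈ M ∧ m Ω = (x : H) := fun x => by
      obtain ⟨m, hm, hmx⟩ := x.2
      exact ⟨m, hm, hmx⟩
    classical
    set f : D → H := fun x => adjoint (hrep x).choose Ω with hf
    have hwell : ∀ (x : D) (m : H →L[ℂ] H), m ∈ M → m Ω = (x : H) → f x = adjoint m Ω := by
      intro x m hm hmx
      obtain ⟨hm₀, hmx₀⟩ := (hrep x).choose_spec
      have : dist (f x) (adjoint m Ω) = 0 := by
        rw [hf]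
        rw [keyd _ hm₀ _ hm, hmx₀, hmx, dist_self]
      simpa using this
    have hfiso : Isometry f := by
      apply Isometry.of_dist_eq
      intro x y
      obtain ⟨mx, hmx, hmxx⟩ := hrep x
      obtain ⟨my, hmy, hmyy⟩ := hrep y
      rw [hwell x mx hmx hmxx, hwell y my hmy hmyy, keyd _ hmx _ hmy, hmxx, hmyy]
      rfl
    have hui : IsUniformInducing ((↑) : D → H) :=
      isUniformEmbedding_subtype_val.isUniformInducing
    have hdr : DenseRange ((↑) : D → H) := hcyclic.denseRange_val
    have hdi : IsDenseInducing ((↑) : D → H) := hui.isDenseInducing hdr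
    set ψ : H → H := hdi.extend f with hψ
    have hψcont : Continuous ψ :=
      (uniformContinuous_uniformly_extend hui hdr hfiso.uniformContinuous).continuous
    have hψeq : ∀ x : D, ψ x = f x := fun x => hdi.extend_eq hfiso.continuous x
    have hψm : ∀ m ∈ M, ψ (m Ω) = adjoint m Ω := by
      intro m hm
      have hx : (m Ω) ∈ D := ⟨m, hm, rfl⟩
      have := hψeq ⟨m Ω, hx⟩
      rw [this, hwell ⟨m Ω, hx⟩ m hm rfl]
    refine ⟨ψ, ?_, hψm⟩
    apply Isometry.of_dist_eq
    intro a b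
    have hdd : Dense (D ×ˢ D) := hcyclic.prod hcyclic
    have heq : (fun p : H × H => dist (ψ p.1) (ψ p.2)) = fun p : H × H => dist p.1 p.2 := by
      apply Continuous.ext_on hdd
      · exact ((hψcont.comp continuous_fst).dist (hψcont.comp continuous_snd))
      · exact continuous_fst.dist continuous_snd
      · rintro ⟨a, b⟩ ⟨ha, hb⟩
        obtain ⟨m, hm, hma⟩ := ha
        obtain ⟨n, hn, hnb⟩ := hb
        have hma' : m Ω = a := hma
        have hnb' : n Ω = b := hnb
        rw [← hma', ← hnb']
        show dist (ψ (m Ω)) (ψ (n Ω)) = dist (m Ω) (n Ω)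
        rw [hψm m hm, hψm n hn, keyd _ hm _ hn]
    exact congrFun heq (a, b)
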